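/- arXiv:1612.03736 — 2 statements merged into one kernel-verified Lean document; each statement's English description precedes it below -/
import Mathlib

section
/- Let G be a connected finite simple graph with more than 2 vertices which is 1-well-covered, and let α = α(G). Then for every integer k with 1 ≤ k < α, we have 2(α − k)·s_k ≤ (k+1)·s_{k+1}. -/
/-!
Let `A` be independent and `S ⊇ A` a maximum independent set. For each `v ∈ S \ A`, the set
`S \ {v}` avoids `v`. Since `G - v` is well-covered and contains an independent set of size `α`
(a maximal independent set of `G` through a neighbour of `v`), `S \ {v}` extends to an
independent set of size `α` avoiding `v`, i.e. by one vertex `w_v ∉ S`. Maximality of `S` forces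
`w_v ∼ v`, while `w_v` has no other neighbour in `S`; so `v ↦ w_v` is injective, and `A` can be
extended by the `2(α - |A|)` distinct vertices of `S \ A` and `{w_v}`. Counting pairs `A ⊂ B` of
independent sets of sizes `k` and `k + 1` now gives `2(α - k) s_k ≤ (k + 1) s_{k+1}`.
-/

open Finset
open scoped Classical

variable {V : Type*}

/-- `S` is an independent set in `G`: its vertices are pairwise non-adjacent. -/
def IsIndepSet (G : SimpleGraph V) (S : Finset V) : Prop :=
  ∀ ⦃u⦄, u ∈ S → ∀ ⦃v⦄, v ∈ S → ¬ G.Adj u v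

/-- The neighborhood `N(S)`: all vertices having at least one neighbor in `S`. -/
noncomputable def neigh [Fintype V] (G : SimpleGraph V) (S : Finset V) : Finset V :=
  Finset.univ.filter fun v => ∃ u ∈ S, G.Adj u v

/-- The independence number `α(G)`: the maximum size of an independent set. -/
noncomputable def indepNum [Fintype V] (G : SimpleGraph V) : ℕ :=
  (Finset.univ.filter fun S : Finset V => IsIndepSet G S).sup Finset.card

/-- `s_k`: the number of independent sets of size `k` in `G`. -/
noncomputable def indepCount [Fintype V] (G : SimpleGraph V) (k : ℕ) : ℕ :=
  (Finset.univ.filter fun S : Finset V => IsIndepSet G S ∧ S.card = k).card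

/-- A maximal independent set (not properly contained in another independent set). -/
def IsMaximalIndepSet (G : SimpleGraph V) (S : Finset V) : Prop :=
  IsIndepSet G S ∧ ∀ T : Finset V, IsIndepSet G T → S ⊆ T → S = T

/-- `G` is well-covered: all maximal independent sets have the same cardinality. -/
def IsWellCovered (G : SimpleGraph V) : Prop :=
  ∀ S T : Finset V, IsMaximalIndepSet G S → IsMaximalIndepSet G T → S.card = T.card

/-- `G` is 1-well-covered: it is well-covered, has at least two vertices, and
deleting any vertex leaves a well-covered graph. -/
def IsOneWellCovered [Fintype V] (G : SimpleGraph V) : Prop :=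
  IsWellCovered G ∧ 2 ≤ Fintype.card V ∧
    ∀ v : V, IsWellCovered (G.induce ({v}ᶜ : Set V))

/-- The corona `H ∘ K₂`: for each vertex `v` of `H`, two new vertices
(`(v, false)` and `(v, true)`) adjacent to each other and to `v` are added. -/
def corona2 (H : SimpleGraph V) : SimpleGraph (V ⊕ V × Bool) :=
  SimpleGraph.fromRel fun x y =>
    match x, y with
    | Sum.inl u, Sum.inl v => H.Adj u v
    | Sum.inl u, Sum.inr (v, _) => u = v
    | Sum.inr (u, _), Sum.inr (v, _) => u = v
    | _, _ => False

section

variable {G : SimpleGraph V} {A B S T : Finset V}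

namespace IsIndepSet

theorem mono (hT : IsIndepSet G T) (hST : S ⊆ T) : IsIndepSet G S :=
  fun _ hu _ hv => hT (hST hu) (hST hv)

theorem empty : IsIndepSet G (∅ : Finset V) :=
  fun _ hu => absurd hu (notMem_empty _)

theorem singleton (v : V) : IsIndepSet G {v} := by
  intro a ha b hb
  rw [mem_singleton] at ha hb
  subst ha hb
  exact G.irrefl

theorem insert_iff {w : V} :
    IsIndepSet G (insert w S) ↔ IsIndepSet G S ∧ ∀ u ∈ S, ¬ G.Adj w u := by
  refine ⟨fun h => ⟨h.mono (subset_insert w S),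
    fun u hu => h (mem_insert_self w S) (mem_insert_of_mem hu)⟩, ?_⟩
  rintro ⟨hS, hw⟩ a ha b hb
  rcases mem_insert.1 ha with rfl | haS <;> rcases mem_insert.1 hb with rfl | hbS
  · exact G.irrefl
  · exact hw b hbS
  · exact fun hab => hw a haS hab.symm
  · exact hS haS hbS

theorem subtype (hS : IsIndepSet G S) (s : Set V) :
    IsIndepSet (G.induce s) (S.subtype (· ∈ s)) :=
  fun _ ha _ hb => hS (mem_subtype.1 ha) (mem_subtype.1 hb)

theorem of_induce {s : Set V} {T : Finset s} (hT : IsIndepSet (G.induce s) T) :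
    IsIndepSet G (T.map (Function.Embedding.subtype _)) := by
  intro a ha b hb
  rw [mem_map] at ha hb
  obtain ⟨a, ha, rfl⟩ := ha
  obtain ⟨b, hb, rfl⟩ := hb
  exact hT ha hb

theorem card_le_indepNum [Fintype V] (hS : IsIndepSet G S) : S.card ≤ indepNum G :=
  le_sup (by simpa using hS)

theorem card_le_indepNum_induce {s : Set V} [Fintype s] (hS : IsIndepSet G S)
    (hSs : ∀ x ∈ S, x ∈ s) :
    S.card ≤ indepNum (G.induce s) := by
  rw [← subtype_map_of_mem hSs, card_map]
  exact (hS.subtype s).card_le_indepNum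

end IsIndepSet

theorem exists_isIndepSet_card_eq_indepNum [Fintype V] (G : SimpleGraph V) :
    ∃ S, IsIndepSet G S ∧ S.card = indepNum G := by
  obtain ⟨S, hS, hcard⟩ := exists_mem_eq_sup (univ.filter fun S : Finset V => IsIndepSet G S)
    ⟨∅, by simpa using IsIndepSet.empty⟩ card
  exact ⟨S, by simpa using hS, hcard.symm⟩

theorem exists_isMaximalIndepSet_superset [Fintype V] (hA : IsIndepSet G A) :
    ∃ S, A ⊆ S ∧ IsMaximalIndepSet G S := by
  obtain ⟨S, hS, hmax⟩ := exists_max_image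
    (univ.filter fun S : Finset V => IsIndepSet G S ∧ A ⊆ S) card ⟨A, by simp [hA]⟩
  simp only [mem_filter, mem_univ, true_and] at hS
  exact ⟨S, hS.2, hS.1, fun T hT hST =>
    eq_of_subset_of_card_le hST (hmax T (by simp [hT, hS.2.trans hST]))⟩

theorem IsWellCovered.card_eq_indepNum [Fintype V] (hG : IsWellCovered G)
    (hS : IsMaximalIndepSet G S) : S.card = indepNum G := by
  obtain ⟨M, hM, hMcard⟩ := exists_isIndepSet_card_eq_indepNum G
  have hMmax : IsMaximalIndepSet G M := ⟨hM, fun T hT hMT =>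
    eq_of_subset_of_card_le hMT (hMcard ▸ hT.card_le_indepNum)⟩
  rw [hG S M hS hMmax, hMcard]

theorem IsWellCovered.exists_superset_card_eq_indepNum [Fintype V] (hG : IsWellCovered G)
    (hA : IsIndepSet G A) : ∃ T, A ⊆ T ∧ IsIndepSet G T ∧ T.card = indepNum G := by
  obtain ⟨T, hAT, hT⟩ := exists_isMaximalIndepSet_superset hA
  exact ⟨T, hAT, hT.1, hG.card_eq_indepNum hT⟩

theorem exists_superset_card_eq_indepNum_induce {s : Set V} [Fintype s]
    (hGs : IsWellCovered (G.induce s)) (hA : IsIndepSet G A) (hAs : ∀ x ∈ A, x ∈ s) :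
    ∃ T, A ⊆ T ∧ IsIndepSet G T ∧ (∀ x ∈ T, x ∈ s) ∧
      T.card = indepNum (G.induce s) := by
  obtain ⟨T, hAT, hT, hcard⟩ := hGs.exists_superset_card_eq_indepNum (hA.subtype s)
  refine ⟨T.map (Function.Embedding.subtype _), ?_, hT.of_induce, ?_, by rw [card_map, hcard]⟩
  calc A = (A.subtype (· ∈ s)).map (Function.Embedding.subtype _) :=
        (subtype_map_of_mem hAs).symm
    _ ⊆ _ := map_subset_map.2 hAT
  · simp only [mem_map]
    rintro _ ⟨x, -, rfl⟩
    exact x.2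

variable [Fintype V]

theorem exists_superset_card_eq_indepNum_of_notMem {v : V} (hG : IsWellCovered G)
    (hGv : IsWellCovered (G.induce {v}ᶜ)) (hv : ∃ u, G.Adj v u)
    (hA : IsIndepSet G A) (hvA : v ∉ A) :
    ∃ T, A ⊆ T ∧ IsIndepSet G T ∧ v ∉ T ∧ T.card = indepNum G := by
  obtain ⟨u, huv⟩ := hv
  obtain ⟨S, huS, hS⟩ := exists_isMaximalIndepSet_superset (IsIndepSet.singleton (G := G) u)
  have hvS : v ∉ S := fun hvS => hS.1 (huS (mem_singleton_self u)) hvS huv.symm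
  have hα : indepNum G ≤ indepNum (G.induce {v}ᶜ) := by
    rw [← hG.card_eq_indepNum hS]
    exact hS.1.card_le_indepNum_induce (s := {v}ᶜ) fun x hx (hxv : x = v) => hvS (hxv ▸ hx)
  obtain ⟨T, hAT, hT, hTv, hcard⟩ :=
    exists_superset_card_eq_indepNum_induce (s := {v}ᶜ) hGv hA
      fun x hx (hxv : x = v) => hvA (hxv ▸ hx)
  exact ⟨T, hAT, hT, fun hvT => hTv v hvT rfl, le_antisymm hT.card_le_indepNum (hcard ▸ hα)⟩

theorem exists_adj_insert_erase_isIndepSet {v : V} (hG : IsWellCovered G)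
    (hGv : IsWellCovered (G.induce {v}ᶜ)) (hv : ∃ u, G.Adj v u)
    (hS : IsIndepSet G S) (hScard : S.card = indepNum G) (hvS : v ∈ S) :
    ∃ w ∉ S, G.Adj w v ∧ IsIndepSet G (insert w (S.erase v)) := by
  obtain ⟨T, hST, hT, hvT, hTcard⟩ := exists_superset_card_eq_indepNum_of_notMem hG hGv hv
    (hS.mono (erase_subset v S)) (notMem_erase v S)
  obtain ⟨w, hwT, hwS'⟩ : ∃ w ∈ T, w ∉ S.erase v := by
    refine exists_mem_notMem_of_card_lt_card ?_
    rw [card_erase_of_mem hvS, hTcard, ← hScard]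
    exact Nat.sub_lt (card_pos.2 ⟨v, hvS⟩) one_pos
  have hwv : w ≠ v := fun h => hvT (h ▸ hwT)
  have hwS : w ∉ S := fun h => hwS' (mem_erase.2 ⟨hwv, h⟩)
  have hins : IsIndepSet G (insert w (S.erase v)) := hT.mono (insert_subset hwT hST)
  refine ⟨w, hwS, ?_, hins⟩
  by_contra hwv_adj
  have hwS_indep : IsIndepSet G (insert w S) := IsIndepSet.insert_iff.2 ⟨hS, fun u hu => by
    rcases eq_or_ne u v with rfl | huv
    · exact hwv_adj
    · exact (IsIndepSet.insert_iff.1 hins).2 u (mem_erase.2 ⟨huv, hu⟩)⟩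
  have := hwS_indep.card_le_indepNum
  rw [card_insert_of_notMem hwS, hScard] at this
  omega

variable (G) in
noncomputable def extensionVertices (A : Finset V) : Finset V :=
  univ.filter fun w => w ∉ A ∧ IsIndepSet G (insert w A)

theorem two_mul_sub_card_le_card_extensionVertices (h1wc : IsOneWellCovered G)
    (hnbr : ∀ v, ∃ u, G.Adj v u) (hA : IsIndepSet G A) :
    2 * (indepNum G - A.card) ≤ (extensionVertices G A).card := by
  obtain ⟨S, hAS, hSmax⟩ := exists_isMaximalIndepSet_superset hA
  have hScard : S.card = indepNum G := h1wc.1.card_eq_indepNum hSmax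
  have hBE : S \ A ⊆ extensionVertices G A := fun w hw => by
    rw [mem_sdiff] at hw
    simpa [extensionVertices, hw.2] using hSmax.1.mono (insert_subset hw.1 hAS)
  have hpartner : ∀ v ∈ S \ A, ∃ w ∉ S, G.Adj w v ∧ IsIndepSet G (insert w (S.erase v)) :=
    fun v hv => exists_adj_insert_erase_isIndepSet h1wc.1 (h1wc.2.2 v) (hnbr v) hSmax.1 hScard
      (mem_sdiff.1 hv).1
  choose! f hfS hfadj hfindep using hpartner
  have hfE : (S \ A).image f ⊆ extensionVertices G A := by
    simp only [image_subset_iff, mem_sdiff]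
    intro v hv
    have hAS' : A ⊆ S.erase v := fun a ha => mem_erase.2 ⟨fun h => hv.2 (h ▸ ha), hAS ha⟩
    exact mem_filter.2 ⟨mem_univ _, fun h => hfS v (mem_sdiff.2 hv) (hAS h),
      (hfindep v (mem_sdiff.2 hv)).mono (insert_subset_insert _ hAS')⟩
  -- `f y` is adjacent to `y`, whereas `f x` has no neighbour in `S` other than `x`.
  have hinj : Set.InjOn f (S \ A : Finset V) := by
    intro x hx y hy hxy
    by_contra hne
    have hyx : y ∈ S.erase x := mem_erase.2 ⟨Ne.symm hne, (mem_sdiff.1 hy).1⟩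
    exact (IsIndepSet.insert_iff.1 (hfindep x hx)).2 y hyx (hxy ▸ hfadj y hy)
  have hdisj : Disjoint (S \ A) ((S \ A).image f) := by
    simp only [disjoint_right, mem_image]
    rintro _ ⟨v, hv, rfl⟩ hfv
    exact hfS v hv (mem_sdiff.1 hfv).1
  calc 2 * (indepNum G - A.card) = (S \ A).card + ((S \ A).image f).card := by
        rw [card_image_of_injOn hinj, card_sdiff_of_subset hAS, hScard]; ring
    _ = (S \ A ∪ (S \ A).image f).card := (card_union_of_disjoint hdisj).symm
    _ ≤ (extensionVertices G A).card := card_le_card (union_subset hBE hfE)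

variable (G) in
noncomputable def indepSetsOfCard (k : ℕ) : Finset (Finset V) :=
  univ.filter fun S => IsIndepSet G S ∧ S.card = k

theorem indepCount_eq_card (k : ℕ) : indepCount G k = (indepSetsOfCard G k).card := rfl

theorem card_extensionVertices_le (A : Finset V) :
    (extensionVertices G A).card ≤
      ((indepSetsOfCard G (A.card + 1)).filter (A ⊆ ·)).card := by
  refine card_le_card_of_injOn (insert · A) (fun w hw => ?_) (fun x hx y _ hxy => ?_)
  · simp only [extensionVertices, mem_coe, mem_filter, mem_univ, true_and] at hw
    simp [indepSetsOfCard, hw.2, card_insert_of_notMem hw.1, subset_insert]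
  · have hx : x ∉ A := (mem_filter.1 hx).2.1
    have : x ∈ insert y A := (show insert x A = insert y A from hxy) ▸ mem_insert_self x A
    exact (mem_insert.1 this).resolve_right hx

theorem card_filter_subset_indepSetsOfCard_le {k : ℕ} (hB : B.card = k + 1) :
    ((indepSetsOfCard G k).filter (· ⊆ B)).card ≤ k + 1 := by
  calc _ ≤ (B.powersetCard k).card := card_le_card fun A hA => by
        simp only [indepSetsOfCard, mem_filter, mem_univ, true_and] at hA
        exact mem_powersetCard.2 ⟨hA.2, hA.1.2⟩
    _ = k + 1 := by rw [card_powersetCard, hB, Nat.choose_succ_self_right]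

theorem two_mul_sub_mul_indepCount_le (h1wc : IsOneWellCovered G)
    (hnbr : ∀ v, ∃ u, G.Adj v u) (k : ℕ) :
    2 * (indepNum G - k) * indepCount G k ≤ (k + 1) * indepCount G (k + 1) := by
  rw [indepCount_eq_card, indepCount_eq_card, mul_comm, mul_comm (k + 1)]
  refine card_mul_le_card_mul (fun A B : Finset V => A ⊆ B) (fun A hA => ?_)
    (fun B hB => card_filter_subset_indepSetsOfCard_le (mem_filter.1 hB).2.2)
  obtain ⟨hAind, rfl⟩ : IsIndepSet G A ∧ A.card = k := by simpa [indepSetsOfCard] using hA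
  exact (two_mul_sub_card_le_card_extensionVertices h1wc hnbr hAind).trans
    (card_extensionVertices_le A)

end

theorem stmt_7_general {V : Type*} [Fintype V] (G : SimpleGraph V)
    (hconn : G.Connected) (h1wc : IsOneWellCovered G)
    (alpha : ℕ) (ha : alpha = indepNum G)
    (k : ℕ) :
    2 * ((alpha : ℤ) - k) * indepCount G k ≤ ((k : ℤ) + 1) * indepCount G (k + 1) := by
  have : Nontrivial V := Fintype.one_lt_card_iff_nontrivial.1 h1wc.2.1
  have hcount := two_mul_sub_mul_indepCount_le h1wc hconn.preconnected.exists_adj_of_nontrivial k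
  subst ha
  calc 2 * ((indepNum G : ℤ) - k) * indepCount G k
      ≤ 2 * ((indepNum G - k : ℕ) : ℤ) * indepCount G k := by
        gcongr
        exact Int.le_natCast_sub _ _
    _ ≤ ((k : ℤ) + 1) * indepCount G (k + 1) := by exact_mod_cast hcount

/-- If `G` is a connected `1`-well-covered graph with more than two
vertices and `α = α(G)`, then `2(α − k)·s_k ≤ (k+1)·s_{k+1}` for all `1 ≤ k < α`. -/
theorem stmt_7 {V : Type*} [Fintype V] (G : SimpleGraph V)
    (hconn : G.Connected) (hcard : 2 < Fintype.card V) (h1wc : IsOneWellCovered G)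
    (alpha : ℕ) (ha : alpha = indepNum G)
    (k : ℕ) (hk1 : 1 ≤ k) (hk2 : k < alpha) :
    2 * ((alpha : ℤ) - k) * indepCount G k ≤ ((k : ℤ) + 1) * indepCount G (k + 1) :=
  stmt_7_general G hconn h1wc alpha ha k
end

section
/- Let H be a connected finite simple graph and let G = H ∘ K₂ be the corona of H with K₂, with α = α(G). If α ≤ 17, then the sequence (s_0, s_1, …, s_α) is unimodal, i.e., there exists an index m with 0 ≤ m ≤ α such that s_0 ≤ s_1 ≤ ⋯ ≤ s_m and s_m ≥ s_{m+1} ≥ ⋯ ≥ s_α. -/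
open Finset
open scoped Classical

variable {V : Type*}

/-!
An independent set of `H ∘ K₂` consists of an independent set `A` of `H` together with, over
each vertex outside `A`, at most one of its two pendant vertices. Hence, with
`n = |V(H)| = α(H ∘ K₂)`, `s_k(H ∘ K₂) = ∑ j, s_j(H) C(n - j, k - j) 2^(k - j)`.
The termwise bound `C(m, t) ≤ 2 C(m, t + 1)` for `3t + 1 ≤ 2m` makes the sequence increase up
to `k ≈ 2n/3`. Past `2n/3 + 1` it decreases: `H` has no isolated vertex, so
`(j + 1) s_{j+1}(H) ≤ (n - 1 - j) s_j(H)`, and for `n ≤ 17` these linear constraints on the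
`s_j(H)` force `s_{k+1} ≤ s_k`, which is checked case by case. The mode is then one of the two
indices in between.
-/

lemma IsIndepSet.mono_s16 {G : SimpleGraph V} {S T : Finset V} (hS : IsIndepSet G S) (hTS : T ⊆ S) :
    IsIndepSet G T := fun _ hu _ hv => hS (hTS hu) (hTS hv)

section IndepCount

variable [Fintype V] {G : SimpleGraph V}

-- Double count pairs `T ⊂ S` of independent sets of sizes `j` and `j + 1`: a neighbour of a
-- vertex of `T` is never the added vertex.
theorem succ_mul_indepCount_succ_le (hG : ∀ u, ∃ w, G.Adj u w) {j : ℕ} (hj : 1 ≤ j) :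
    (j + 1) * indepCount G (j + 1) ≤ (Fintype.card V - 1 - j) * indepCount G j := by
  rw [indepCount, indepCount, mul_comm, mul_comm _ #_]
  refine card_mul_le_card_mul (fun S T => T ⊆ S) (fun S hS => ?_) (fun T hT => ?_)
  · simp only [mem_filter, mem_univ, true_and] at hS
    calc j + 1 = #(S.powersetCard j) := by simp [hS.2]
      _ ≤ _ := card_le_card fun T hT => by
        obtain ⟨hTS, hT⟩ := mem_powersetCard.mp hT
        simpa [bipartiteAbove, hT, hTS] using hS.1.mono_s16 hTS
  · simp only [mem_filter, mem_univ, true_and] at hT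
    obtain ⟨u, hu⟩ : T.Nonempty := card_pos.mp (by omega)
    obtain ⟨w, huw⟩ := hG u
    have hwT : w ∉ T := fun hw => hT.1 hu hw huw
    calc #(bipartiteBelow _ _ T) ≤ #((univ \ insert w T).image (insert · T)) :=
          card_le_card fun S hS => ?_
      _ ≤ #(univ \ insert w T) := card_image_le
      _ = Fintype.card V - 1 - j := by
          rw [card_sdiff_of_subset (subset_univ _), card_insert_of_notMem hwT, hT.2, card_univ]
          omega
    simp only [bipartiteBelow, mem_filter, mem_univ, true_and] at hS
    obtain ⟨v, hvT, rfl⟩ := exists_eq_insert_iff.mpr ⟨hS.2, by omega⟩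
    refine mem_image.mpr ⟨v, ?_, rfl⟩
    simp only [mem_sdiff, mem_univ, mem_insert, true_and, not_or]
    refine ⟨?_, hvT⟩
    rintro rfl
    exact hS.1.1 (mem_insert_of_mem hu) (mem_insert_self _ _) huw

end IndepCount

section Corona

variable {H : SimpleGraph V} {u v : V} {b c : Bool}

@[simp] lemma corona2_adj_inl_inl : (corona2 H).Adj (.inl u) (.inl v) ↔ H.Adj u v := by
  simp only [corona2, SimpleGraph.fromRel_adj, ne_eq, Sum.inl.injEq]
  exact ⟨fun h => h.2.elim id H.adj_symm, fun h => ⟨H.ne_of_adj h, .inl h⟩⟩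

@[simp] lemma corona2_adj_inl_inr : (corona2 H).Adj (.inl u) (.inr (v, b)) ↔ u = v := by
  simp [corona2]

@[simp] lemma corona2_adj_inr_inl : (corona2 H).Adj (.inr (u, b)) (.inl v) ↔ u = v := by
  simp [corona2, eq_comm]

@[simp] lemma corona2_adj_inr_inr :
    (corona2 H).Adj (.inr (u, b)) (.inr (v, c)) ↔ u = v ∧ b ≠ c := by
  simp only [corona2, SimpleGraph.fromRel_adj]
  grind

theorem isIndepSet_corona2_iff {S : Finset (V ⊕ V × Bool)} :
    IsIndepSet (corona2 H) S ↔ IsIndepSet H S.toLeft ∧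
      Set.InjOn Prod.fst (S.toRight : Set (V × Bool)) ∧
      Disjoint S.toLeft (S.toRight.image Prod.fst) := by
  refine ⟨fun hS => ⟨?_, ?_, ?_⟩, fun ⟨hL, hR, hLR⟩ => ?_⟩
  · intro u hu v hv huv
    exact hS (mem_toLeft.mp hu) (mem_toLeft.mp hv) (by simpa using huv)
  · rintro ⟨u, b⟩ hu ⟨v, c⟩ hv (rfl : u = v)
    by_contra hbc
    exact hS (mem_toRight.mp hu) (mem_toRight.mp hv) (by simpa using hbc)
  · refine disjoint_left.mpr fun u hu hu' => ?_
    obtain ⟨⟨_, b⟩, hb, rfl⟩ := mem_image.mp hu'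
    exact hS (mem_toLeft.mp hu) (mem_toRight.mp hb) (by simp)
  · rintro (u | ⟨u, b⟩) hu (v | ⟨v, c⟩) hv huv <;>
      simp only [← mem_toLeft, ← mem_toRight] at hu hv
    · exact hL hu hv (by simpa using huv)
    · obtain rfl : u = v := by simpa using huv
      exact disjoint_left.mp hLR hu (mem_image_of_mem Prod.fst hv)
    · obtain rfl : u = v := by simpa using huv
      exact disjoint_left.mp hLR hv (mem_image_of_mem Prod.fst hu)
    · obtain ⟨rfl, hbc⟩ := corona2_adj_inr_inr.mp huv
      exact hbc (Prod.ext_iff.mp (hR hu hv rfl)).2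

end Corona

section PartialGraphs

variable {α : Type*}

noncomputable def partialGraphs (X : Finset α) (t : ℕ) : Finset (Finset (α × Bool)) :=
  {R ∈ (X ×ˢ univ).powerset | Set.InjOn Prod.fst (R : Set (α × Bool)) ∧ #R = t}

theorem card_partialGraphs (X : Finset α) (t : ℕ) :
    #(partialGraphs X t) = (#X).choose t * 2 ^ t := by
  -- `R` is determined by its domain `W` and the part `U ⊆ W` that it maps to `true`.
  calc #(partialGraphs X t) = #((X.powersetCard t).sigma powerset) := by
        refine card_nbij'
          (fun R => ⟨R.image Prod.fst, (R.image Prod.fst).filter fun v => (v, true) ∈ R⟩)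
          (fun p => p.1.image fun v => (v, decide (v ∈ p.2))) ?_ ?_ ?_ ?_
        · intro R hR
          simp only [partialGraphs, coe_filter, mem_powerset, Set.mem_ofPred_eq] at hR
          simp only [coe_sigma, Set.mem_sigma_iff, mem_coe, mem_powersetCard, mem_powerset]
          refine ⟨⟨?_, ?_⟩, ?_⟩
          · grind
          · rw [card_image_of_injOn hR.2.1, hR.2.2]
          · grind
        · rintro ⟨W, U⟩ hWU
          simp only [coe_sigma, Set.mem_sigma_iff, mem_coe, mem_powersetCard, mem_powerset] at hWU
          simp only [partialGraphs, coe_filter, mem_powerset, Set.mem_ofPred_eq]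
          refine ⟨?_, ?_, ?_⟩
          · grind
          · rw [coe_image]
            rintro _ ⟨v, -, rfl⟩ _ ⟨w, -, rfl⟩ (rfl : v = w)
            rfl
          · rw [card_image_of_injective _ fun v w h => congrArg Prod.fst h, hWU.1.2]
        · intro R hR
          simp only [partialGraphs, coe_filter, mem_powerset, Set.mem_ofPred_eq] at hR
          have hR' : ∀ v, (v, true) ∈ R → (v, false) ∉ R := fun v ht hf =>
            Bool.noConfusion (Prod.ext_iff.mp (hR.2.1 ht hf rfl)).2
          ext ⟨v, b⟩
          cases b <;> simp only [mem_filter, mem_image, Prod.exists, exists_and_right,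
            Bool.exists_bool, exists_eq_right, Bool.decide_and, Bool.decide_or, Prod.mk.injEq,
            Bool.and_eq_true, Bool.and_eq_false_imp, Bool.or_eq_true, decide_eq_true_eq,
            decide_eq_false_iff_not, existsAndEq, true_and] <;> grind
        · rintro ⟨W, U⟩ hWU
          simp only [coe_sigma, Set.mem_sigma_iff, mem_coe, mem_powersetCard, mem_powerset] at hWU
          ext v
          simp only [mem_image, exists_exists_and_eq_and, exists_eq_right]
          grind
    _ = (#X).choose t * 2 ^ t := by
        rw [card_sigma, sum_congr rfl fun W hW => by rw [card_powerset, (mem_powersetCard.mp hW).2],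
          sum_const, card_powersetCard, smul_eq_mul]

end PartialGraphs

/-- The coefficient of `x ^ k` in `∑ j, s j * x ^ j * (1 + 2 * x) ^ (n - j)`. -/
def coronaCoeff (s : ℕ → ℕ) (n k : ℕ) : ℕ :=
  ∑ j ∈ range (k + 1), s j * (n - j).choose (k - j) * 2 ^ (k - j)

section CoronaCount

variable [Fintype V] {H : SimpleGraph V}

theorem indepCount_corona2 (k : ℕ) :
    indepCount (corona2 H) k = coronaCoeff (indepCount H) (Fintype.card V) k := by
  let I : ℕ → Finset (Finset V) := fun j => {A | IsIndepSet H A ∧ #A = j}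
  calc indepCount (corona2 H) k
      = #((range (k + 1)).sigma fun j => (I j).sigma fun A => partialGraphs Aᶜ (k - j)) := by
        refine card_nbij' (fun S => ⟨#S.toLeft, S.toLeft, S.toRight⟩)
          (fun p => p.2.1.disjSum p.2.2) ?_ ?_ ?_ ?_
        · intro S hS
          simp only [coe_filter, Set.mem_ofPred_eq, mem_univ, true_and,
            isIndepSet_corona2_iff] at hS
          obtain ⟨⟨hL, hR, hLR⟩, hk⟩ := hS
          have hcard := card_toLeft_add_card_toRight (u := S)
          simp only [coe_sigma, Set.mem_sigma_iff, mem_coe, mem_range, I, mem_filter, mem_univ,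
            true_and, and_true, partialGraphs, mem_powerset]
          refine ⟨by omega, hL, ?_, hR, by omega⟩
          intro p hp
          simpa using disjoint_right.mp hLR (mem_image_of_mem Prod.fst hp)
        · rintro ⟨j, A, R⟩ h
          simp only [coe_sigma, Set.mem_sigma_iff, mem_coe, mem_range, I, mem_filter, mem_univ,
            true_and, partialGraphs, mem_powerset] at h
          obtain ⟨hj, ⟨hA, rfl⟩, hRA, hR, hRcard⟩ := h
          simp only [coe_filter, Set.mem_ofPred_eq, mem_univ, true_and,
            isIndepSet_corona2_iff, toLeft_disjSum, toRight_disjSum, card_disjSum]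
          refine ⟨⟨hA, hR, disjoint_left.mpr fun v hv hv' => ?_⟩, by omega⟩
          obtain ⟨⟨_, b⟩, hb, rfl⟩ := mem_image.mp hv'
          simpa [hv] using hRA hb
        · intro S _
          exact toLeft_disjSum_toRight
        · rintro ⟨j, A, R⟩ h
          simp only [coe_sigma, Set.mem_sigma_iff, mem_coe, I, mem_filter, mem_univ, true_and] at h
          obtain ⟨-, ⟨-, rfl⟩, -⟩ := h
          simp
    _ = coronaCoeff (indepCount H) (Fintype.card V) k := by
        rw [coronaCoeff, card_sigma]
        refine sum_congr rfl fun j _ => ?_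
        rw [card_sigma, sum_congr rfl fun A hA => ?_, sum_const, smul_eq_mul, indepCount, mul_assoc]
        rw [card_partialGraphs, card_compl, (mem_filter.mp hA).2.2]

end CoronaCount

section CoronaIndepNum

variable [Fintype V] {H : SimpleGraph V}

lemma card_le_of_isIndepSet_corona2 {S : Finset (V ⊕ V × Bool)}
    (hS : IsIndepSet (corona2 H) S) : #S ≤ Fintype.card V := by
  obtain ⟨-, hR, hLR⟩ := isIndepSet_corona2_iff.mp hS
  calc #S = #S.toLeft + #(S.toRight.image Prod.fst) := by
        rw [card_image_of_injOn hR, card_toLeft_add_card_toRight]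
    _ = #(S.toLeft ∪ S.toRight.image Prod.fst) := (card_union_of_disjoint hLR).symm
    _ ≤ Fintype.card V := card_le_univ _

theorem indepNum_corona2 : indepNum (corona2 H) = Fintype.card V := by
  refine le_antisymm
    (Finset.sup_le fun S hS => card_le_of_isIndepSet_corona2 (mem_filter.mp hS).2) ?_
  let S : Finset (V ⊕ V × Bool) := (∅ : Finset V).disjSum (univ ×ˢ {false})
  have hS : IsIndepSet (corona2 H) S := by simp [S, IsIndepSet]
  calc Fintype.card V = #S := by simp [S]
    _ ≤ indepNum (corona2 H) := le_sup (mem_filter.mpr ⟨mem_univ _, hS⟩)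

end CoronaIndepNum

lemma choose_le_two_mul_choose_succ {m t : ℕ} (h : 3 * t + 1 ≤ 2 * m) :
    m.choose t ≤ 2 * m.choose (t + 1) := by
  have key := Nat.choose_succ_right_eq m t
  refine Nat.le_of_mul_le_mul_right (c := t + 1) ?_ t.succ_pos
  calc m.choose t * (t + 1) ≤ m.choose t * (2 * (m - t)) := Nat.mul_le_mul_left _ (by omega)
    _ = 2 * m.choose (t + 1) * (t + 1) := by rw [mul_assoc 2, key]; ring

theorem coronaCoeff_le_succ (s : ℕ → ℕ) {n k : ℕ} (h : 3 * k + 1 ≤ 2 * n) :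
    coronaCoeff s n k ≤ coronaCoeff s n (k + 1) := by
  calc coronaCoeff s n k
      ≤ ∑ j ∈ range (k + 1), s j * (n - j).choose (k + 1 - j) * 2 ^ (k + 1 - j) := by
        refine sum_le_sum fun j hj => ?_
        have hjk : j ≤ k := Nat.lt_succ_iff.mp (mem_range.mp hj)
        rw [Nat.sub_add_comm hjk, pow_succ, mul_assoc, mul_assoc]
        gcongr s j * ?_
        calc (n - j).choose (k - j) * 2 ^ (k - j)
            ≤ 2 * (n - j).choose (k - j + 1) * 2 ^ (k - j) :=
              Nat.mul_le_mul_right _ (choose_le_two_mul_choose_succ (by omega))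
          _ = (n - j).choose (k - j + 1) * (2 ^ (k - j) * 2) := by ring
    _ ≤ coronaCoeff s n (k + 1) :=
        sum_le_sum_of_subset (range_subset_range.mpr (k + 1).le_succ)

set_option maxHeartbeats 800000 in
theorem coronaCoeff_succ_le {s : ℕ → ℕ} {n k : ℕ}
    (hs : ∀ j, 1 ≤ j → (j + 1) * s (j + 1) ≤ (n - 1 - j) * s j) (hn : n ≤ 17)
    (hk : (2 * n - 1) / 3 + 2 ≤ k) (hkn : k < n) :
    coronaCoeff s n (k + 1) ≤ coronaCoeff s n k := by
  have C1 := hs 1 le_rfl; have C2 := hs 2 (by norm_num); have C3 := hs 3 (by norm_num)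
  have C4 := hs 4 (by norm_num); have C5 := hs 5 (by norm_num); have C6 := hs 6 (by norm_num)
  have C7 := hs 7 (by norm_num); have C8 := hs 8 (by norm_num); have C9 := hs 9 (by norm_num)
  have C10 := hs 10 (by norm_num); have C11 := hs 11 (by norm_num)
  have C12 := hs 12 (by norm_num); have C13 := hs 13 (by norm_num)
  have C14 := hs 14 (by norm_num); have C15 := hs 15 (by norm_num)
  have C16 := hs 16 (by norm_num)
  clear hs
  interval_cases n <;> interval_cases k <;>
    norm_num at C1 C2 C3 C4 C5 C6 C7 C8 C9 C10 C11 C12 C13 C14 C15 C16 <;>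
    simp only [coronaCoeff, sum_range_succ, sum_range_zero] <;> norm_num [Nat.choose] <;> omega

lemma exists_unimodal_of_le {f : ℕ → ℕ} {p N : ℕ} (hpN : p ≤ N)
    (hinc : ∀ k, k < p → f k ≤ f (k + 1))
    (hdec : ∀ k, p + 1 ≤ k → k < N → f (k + 1) ≤ f k) :
    ∃ m : ℕ, m ≤ N ∧ (∀ k : ℕ, k < m → f k ≤ f (k + 1)) ∧
      (∀ k : ℕ, m ≤ k → k < N → f (k + 1) ≤ f k) := by
  by_cases h : p < N ∧ f p < f (p + 1)
  · refine ⟨p + 1, h.1, fun k hk => ?_, hdec⟩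
    rcases Nat.lt_succ_iff_lt_or_eq.mp hk with hk | rfl
    · exact hinc k hk
    · exact h.2.le
  · refine ⟨p, hpN, hinc, fun k hk hkN => ?_⟩
    rcases hk.eq_or_lt with rfl | hk
    · exact not_lt.mp fun h' => h ⟨hkN, h'⟩
    · exact hdec k hk hkN

/-- If `H` is a connected graph and `G = H ∘ K₂` with `α = α(G) ≤ 17`,
then the sequence `(s_0, s_1, …, s_α)` is unimodal. -/
theorem stmt_16 {V : Type*} [Fintype V] (H : SimpleGraph V) (hconn : H.Connected)
    (G : SimpleGraph (V ⊕ V × Bool)) (hG : G = corona2 H)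
    (alpha : ℕ) (ha : alpha = indepNum G) (ha17 : alpha ≤ 17) :
    ∃ m : ℕ, m ≤ alpha ∧
      (∀ k : ℕ, k < m → indepCount G k ≤ indepCount G (k + 1)) ∧
      (∀ k : ℕ, m ≤ k → k < alpha → indepCount G (k + 1) ≤ indepCount G k) := by
  subst hG ha
  rw [indepNum_corona2] at ha17 ⊢
  simp only [indepCount_corona2]
  have hn : 0 < Fintype.card V := Fintype.card_pos_iff.mpr hconn.nonempty
  refine exists_unimodal_of_le (p := (2 * Fintype.card V - 1) / 3 + 1) (by omega)
    (fun k hk => coronaCoeff_le_succ _ (by omega)) fun k hk hkn => ?_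
  have : Nontrivial V := Fintype.one_lt_card_iff_nontrivial.mp (by omega)
  exact coronaCoeff_succ_le
    (fun j => succ_mul_indepCount_succ_le hconn.preconnected.exists_adj_of_nontrivial)
    ha17 (by omega) hkn
end
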